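/- Let X and Y be sets, c : X × Y → ℝ, X' ⊆ X, Y' ⊆ Y, and let c' be the restriction of c to X' × Y'. Let f : X → (-∞,+∞] be c-convex, let M : X' ⇉ Y' be any multivalued mapping with G(M) ⊆ G(∂_c f) ∩ (X' × Y'), and let S be a nonempty subset of dom(M). Then the function f̃ := f|_{X'} + ι_{dom(M)} (equal to f on dom(M) and +∞ on X' \ dom(M)) is a c'-antiderivative of M with f̃|_S = f|_S; consequently, the set 𝒜_{[c',f|_S,M]} of all c'-convex functions f' : X' → (-∞,+∞] with G(M) ⊆ G(∂_{c'} f') and f'|_S = f|_S is nonempty. -/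

import Mathlib

noncomputable section

open scoped Classical

variable {X Y : Type*}

/-- The `c`-transform of `f : X → EReal`, a function on `Y`:
`f^c(y) = sup_{x ∈ X} (c(x,y) - f(x))`. The `c`-transform of a function on `Y` is obtained
by applying this to the swapped coupling `fun y x => c x y`. -/
def cTransform (c : X → Y → ℝ) (f : X → EReal) : Y → EReal :=
  fun y => ⨆ x, ((c x y : EReal) - f x)

/-- `f` is proper: it takes no value `-∞` (i.e. maps into `(-∞, +∞]`) and is finite somewhere. -/
def ProperFn (f : X → EReal) : Prop :=
  (∀ x, f x ≠ ⊥) ∧ ∃ x, f x ≠ ⊤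

/-- `f` is `c`-convex: it is proper and is the `c`-transform of some proper
`g : Y → (-∞, +∞]`. -/
def IsCConvex (c : X → Y → ℝ) (f : X → EReal) : Prop :=
  ProperFn f ∧ ∃ g : Y → EReal, ProperFn g ∧ f = cTransform (fun y x => c x y) g

/-- The `c`-subdifferential of `f`:
`∂_c f(x) = { y | ∀ x', f(x) + c(x',y) ≤ f(x') + c(x,y) }`. -/
def cSubdiff (c : X → Y → ℝ) (f : X → EReal) (x : X) : Set Y :=
  { y | ∀ x', f x + (c x' y : EReal) ≤ f x' + (c x y : EReal) }

/-- The domain of a multivalued mapping `M : X ⇉ Y`. -/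
def mapDom (M : X → Set Y) : Set X := { x | (M x).Nonempty }

/-- The inverse multivalued mapping `M⁻¹ : Y ⇉ X`. -/
def mapInv (M : X → Set Y) : Y → Set X := fun y => { x | y ∈ M x }

/-- The image `M(S) = ⋃_{s ∈ S} M(s)` of a set `S` under a multivalued mapping. -/
def mapImageOn (M : X → Set Y) (S : Set X) : Set Y := { y | ∃ s ∈ S, y ∈ M s }

/-- The image `Im(M) = ⋃_{x ∈ X} M(x)` of a multivalued mapping. -/
def mapIm (M : X → Set Y) : Set Y := { y | ∃ x, y ∈ M x }

/-- `f` is a `c`-antiderivative of `M`: `f` is proper and `G(M) ⊆ G(∂_c f)`. -/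
def IsCAntiderivative (c : X → Y → ℝ) (f : X → EReal) (M : X → Set Y) : Prop :=
  ProperFn f ∧ ∀ x y, y ∈ M x → y ∈ cSubdiff c f x

/-- The family `𝒜_{[c, f|_S, M]}` of all `c`-convex `c`-antiderivatives of `M`
which coincide with `f` on `S`. -/
def cFamily (c : X → Y → ℝ) (f : X → EReal) (S : Set X) (M : X → Set Y) :
    Set (X → EReal) :=
  { h | IsCConvex c h ∧ (∀ x y, y ∈ M x → y ∈ cSubdiff c h x) ∧ ∀ s ∈ S, h s = f s }

/-- The upper envelope `γ_{[c, f|_S, M]}`. -/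
def upperEnv (c : X → Y → ℝ) (f : X → EReal) (S : Set X) (M : X → Set Y) : X → EReal :=
  fun x => ⨆ h ∈ cFamily c f S M, h x

/-- The lower envelope `α_{[c, f|_S, M]}`. -/
def lowerEnv (c : X → Y → ℝ) (f : X → EReal) (S : Set X) (M : X → Set Y) : X → EReal :=
  fun x => ⨅ h ∈ cFamily c f S M, h x

/-- The indicator function `ι_A` (0 on `A`, `+∞` off `A`). -/
def indicatorE (A : Set X) : X → EReal := fun x => if x ∈ A then 0 else ⊤

/-- Rockafellar's function `R_{[c,M,s]}`: the supremum over `n ≥ 1` and chains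
`x_1 = s`, `x_{n+1} = x`, `{(x_i, y_i)}_{i=1}^n ⊆ G(M)` of
`Σ_{i=1}^n [c(x_{i+1}, y_i) - c(x_i, y_i)]` (0-indexed below). -/
def rockafellar (c : X → Y → ℝ) (M : X → Set Y) (s : X) : X → EReal := fun x =>
  ⨆ (n : ℕ) (_ : 0 < n) (xs : ℕ → X) (ys : ℕ → Y)
      (_ : xs 0 = s ∧ ∀ i < n, ys i ∈ M (xs i)),
    (((∑ i ∈ Finset.range n,
        (c (if i + 1 < n then xs (i + 1) else x) (ys i) - c (xs i) (ys i))) : ℝ) : EReal)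

/-- `M` is cyclically monotone of order `n` with respect to `c`: for any `n` pairs
`{(x_i, y_i)}_{i=1}^n ⊆ G(M)`, setting `x_{n+1} = x_1`,
`0 ≤ Σ_{i=1}^n [c(x_i,y_i) - c(x_{i+1},y_i)]` (0-indexed below, cyclically). -/
def IsNCMonotone (c : X → Y → ℝ) (M : X → Set Y) (n : ℕ) : Prop :=
  ∀ (xs : ℕ → X) (ys : ℕ → Y), (∀ i < n, ys i ∈ M (xs i)) →
    0 ≤ ∑ i ∈ Finset.range n, (c (xs i) (ys i) - c (xs ((i + 1) % n)) (ys i))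

/-- `M` is `c`-cyclically monotone: `n`-`c`-monotone for all `n`. -/
def IsCCyclicallyMonotone (c : X → Y → ℝ) (M : X → Set Y) : Prop :=
  ∀ n : ℕ, IsNCMonotone c M n

/-!
Off `dom M` the function `f̃ = f|_{X'} + ι_{dom M}` is `+∞`, on `dom M` it agrees with `f`, and
`f̃ ≥ f|_{X'}` everywhere; hence every `c`-subgradient inequality of `f` at a point of `dom M`
remains valid for `f̃`. For the family, take the double transform `f̃^{c'c'}`: where
`y ∈ ∂_{c'} f̃(x)` with `f̃(x)` finite, the Fenchel–Young equality `f̃^{c'}(y) = c'(x,y) - f̃(x)`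
gives `f̃^{c'c'}(x) = f̃(x)` and `y ∈ ∂_{c'} f̃^{c'c'}(x)`.
-/

lemma EReal.coe_sub_le_comm {a : ℝ} {b d : EReal} : (a : EReal) - b ≤ d ↔ (a : EReal) - d ≤ b := by
  suffices ∀ b d : EReal, (a : EReal) - b ≤ d → (a : EReal) - d ≤ b from ⟨this b d, this d b⟩
  intro b d h
  induction b <;> induction d <;> simp_all [← EReal.coe_sub, EReal.sub_top]
  linarith

section CTransform

variable {c : X → Y → ℝ} {f g : X → EReal} {x x₀ : X} {y : Y} {r : ℝ}

lemma ne_top_of_mem_cSubdiff (hx₀ : f x₀ ≠ ⊤) (hy : y ∈ cSubdiff c f x) : f x ≠ ⊤ := by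
  intro hx
  have h := hy x₀
  rw [hx, EReal.top_add_coe, top_le_iff] at h
  exact EReal.add_ne_top hx₀ (EReal.coe_ne_top _) h

lemma mem_cSubdiff_of_le (hy : y ∈ cSubdiff c f x) (hfg : f ≤ g) (hx : g x = f x) :
    y ∈ cSubdiff c g x := fun x' =>
  hx ▸ (hy x').trans (add_le_add_left (hfg x') _)

lemma le_cTransform (x : X) (y : Y) : (c x y : EReal) - f x ≤ cTransform c f y :=
  le_iSup (fun x' => (c x' y : EReal) - f x') x

lemma cTransform_ne_bot (hx : f x ≠ ⊤) (y : Y) : cTransform c f y ≠ ⊥ := by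
  refine ne_bot_of_le_ne_bot ?_ (le_cTransform x y)
  rw [sub_eq_add_neg]
  exact EReal.add_ne_bot_iff.2 ⟨EReal.coe_ne_bot _, by rwa [ne_eq, EReal.neg_eq_bot_iff]⟩

lemma cTransform_cTransform_le (x : X) :
    cTransform (fun y x => c x y) (cTransform c f) x ≤ f x :=
  iSup_le fun y => EReal.coe_sub_le_comm.2 (le_cTransform x y)

lemma cTransform_eq_of_mem_cSubdiff (hx : f x = r) (hy : y ∈ cSubdiff c f x) :
    cTransform c f y = ((c x y - r : ℝ) : EReal) := by
  refine le_antisymm (iSup_le fun x' => ?_) (by rw [EReal.coe_sub, ← hx]; exact le_cTransform x y)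
  have h := EReal.sub_le_of_le_add (hx ▸ hy x')
  rw [EReal.coe_sub_le_comm]
  convert h using 1
  norm_cast
  ring

lemma cTransform_cTransform_eq_of_mem_cSubdiff (hx : f x = r) (hy : y ∈ cSubdiff c f x) :
    cTransform (fun y x => c x y) (cTransform c f) x = r := by
  refine le_antisymm (hx ▸ cTransform_cTransform_le x) ?_
  have h := le_cTransform (c := fun y x => c x y) (f := cTransform c f) y x
  rw [cTransform_eq_of_mem_cSubdiff hx hy] at h
  convert h using 1
  norm_cast
  ring

lemma mem_cSubdiff_cTransform_cTransform (hx : f x = r) (hy : y ∈ cSubdiff c f x) :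
    y ∈ cSubdiff c (cTransform (fun y x => c x y) (cTransform c f)) x := by
  intro x'
  have h := le_cTransform (c := fun y x => c x y) (f := cTransform c f) y x'
  rw [cTransform_eq_of_mem_cSubdiff hx hy] at h
  rw [cTransform_cTransform_eq_of_mem_cSubdiff hx hy]
  convert add_le_add_left h (c x y : EReal) using 1
  norm_cast
  ring

lemma isCConvex_cTransform_cTransform (hx : f x = r) (hy : y ∈ cSubdiff c f x) :
    IsCConvex c (cTransform (fun y x => c x y) (cTransform c f)) := by
  have hfy := cTransform_eq_of_mem_cSubdiff hx hy
  refine ⟨⟨cTransform_ne_bot (x := y) ?_, x, ?_⟩, _, ⟨cTransform_ne_bot (x := x) ?_, y, ?_⟩, rfl⟩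
  · rw [hfy]; exact EReal.coe_ne_top _
  · rw [cTransform_cTransform_eq_of_mem_cSubdiff hx hy]; exact EReal.coe_ne_top _
  · rw [hx]; exact EReal.coe_ne_top _
  · rw [hfy]; exact EReal.coe_ne_top _

end CTransform

section Antiderivative

variable {c : X → Y → ℝ} {F : X → EReal} {M : X → Set Y} {S : Set X} {x : X}

lemma IsCAntiderivative.ne_top (hF : IsCAntiderivative c F M) (hx : x ∈ mapDom M) : F x ≠ ⊤ := by
  obtain ⟨⟨-, x₀, hx₀⟩, hM⟩ := hF
  obtain ⟨y, hy⟩ := hx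
  exact ne_top_of_mem_cSubdiff hx₀ (hM x y hy)

theorem IsCAntiderivative.cTransform_cTransform_mem_cFamily (hF : IsCAntiderivative c F M)
    (hdom : (mapDom M).Nonempty) (hS : S ⊆ mapDom M) :
    cTransform (fun y x => c x y) (cTransform c F) ∈ cFamily c F S M := by
  have hreal : ∀ x y, y ∈ M x → F x = ((F x).toReal : EReal) := fun x y hy =>
    (EReal.coe_toReal (hF.ne_top ⟨y, hy⟩) (hF.1.1 x)).symm
  obtain ⟨x₀, y₀, hy₀⟩ := hdom
  refine ⟨isCConvex_cTransform_cTransform (hreal x₀ y₀ hy₀) (hF.2 x₀ y₀ hy₀),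
    fun x y hy => mem_cSubdiff_cTransform_cTransform (hreal x y hy) (hF.2 x y hy), fun s hs => ?_⟩
  obtain ⟨y, hy⟩ := hS hs
  rw [cTransform_cTransform_eq_of_mem_cSubdiff (hreal s y hy) (hF.2 s y hy), ← hreal s y hy]

end Antiderivative

section Indicator

variable {A : Set X} {x : X}

lemma indicatorE_nonneg (A : Set X) (x : X) : 0 ≤ indicatorE A x := by
  unfold indicatorE
  split_ifs <;> simp

lemma le_add_indicatorE (f : X → EReal) (A : Set X) : f ≤ fun x => f x + indicatorE A x :=
  fun x => le_add_of_nonneg_right (indicatorE_nonneg A x)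

lemma add_indicatorE_of_mem (f : X → EReal) (hx : x ∈ A) : f x + indicatorE A x = f x := by
  simp [indicatorE, hx]

lemma add_indicatorE_ne_bot {f : X → EReal} (hf : f x ≠ ⊥) : f x + indicatorE A x ≠ ⊥ :=
  EReal.add_ne_bot_iff.2 ⟨hf, ne_bot_of_le_ne_bot EReal.zero_ne_bot (indicatorE_nonneg A x)⟩

end Indicator

theorem isCAntiderivative_restrict_add_indicatorE {c : X → Y → ℝ} {f : X → EReal}
    (hf : ProperFn f) {X' : Set X} {Y' : Set Y} {M : X' → Set Y'}
    (hM : ∀ (x : X') (y : Y'), y ∈ M x → (y : Y) ∈ cSubdiff c f x) (hdom : (mapDom M).Nonempty) :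
    IsCAntiderivative (fun (x : X') (y : Y') => c x y)
      (fun x => f x + indicatorE (mapDom M) x) M := by
  obtain ⟨hf_ne_bot, x₁, hx₁⟩ := hf
  obtain ⟨x₀, y₀, hy₀⟩ := hdom
  refine ⟨⟨fun x => add_indicatorE_ne_bot (f := fun x : X' => f x) (hf_ne_bot x), x₀, ?_⟩,
    fun x y hy => ?_⟩
  · dsimp only
    rw [add_indicatorE_of_mem (fun x : X' => f x) (show x₀ ∈ mapDom M from ⟨y₀, hy₀⟩)]
    exact ne_top_of_mem_cSubdiff hx₁ (hM x₀ y₀ hy₀)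
  · exact mem_cSubdiff_of_le (fun x' => hM x y hy x') (le_add_indicatorE _ _)
      (add_indicatorE_of_mem (fun x : X' => f x) (show x ∈ mapDom M from ⟨y, hy⟩))

theorem statement14_general (c : X → Y → ℝ)
    (X' : Set X) (Y' : Set Y)
    (f : X → EReal) (hf : IsCConvex c f)
    (M : X' → Set Y')
    (hM : ∀ (x : X') (y : Y'), y ∈ M x → (y : Y) ∈ cSubdiff c f x)
    (S : Set X') (hS : S.Nonempty) (hSdom : S ⊆ mapDom M) :
    (IsCAntiderivative (fun (x : X') (y : Y') => c x y)
          (fun x => f x + indicatorE (mapDom M) x) M ∧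
        ∀ s ∈ S, f (s : X) + indicatorE (mapDom M) s = f s) ∧
      (cFamily (fun (x : X') (y : Y') => c x y) (fun x : X' => f x) S M).Nonempty := by
  have hF := isCAntiderivative_restrict_add_indicatorE hf.1 hM (hS.mono hSdom)
  have hFS : ∀ s ∈ S, f (s : X) + indicatorE (mapDom M) s = f s := fun s hs =>
    add_indicatorE_of_mem (fun x : X' => f x) (hSdom hs)
  obtain ⟨hconv, hsub, heq⟩ := hF.cTransform_cTransform_mem_cFamily (hS.mono hSdom) hSdom
  exact ⟨⟨hF, hFS⟩, _, hconv, hsub, fun s hs => (heq s hs).trans (hFS s hs)⟩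

/-- refined restriction lemma. With `f` `c`-convex,
`G(M) ⊆ G(∂_c f) ∩ (X' × Y')` and `∅ ≠ S ⊆ dom M`, the function
`f̃ = f|_{X'} + ι_{dom M}` is a `c'`-antiderivative of `M` coinciding with `f` on `S`;
consequently the family `𝒜_{[c', f|_S, M]}` is nonempty. -/
theorem statement14 [Nonempty X] [Nonempty Y] (c : X → Y → ℝ)
    (X' : Set X) (Y' : Set Y) [Nonempty X'] [Nonempty Y']
    (f : X → EReal) (hf : IsCConvex c f)
    (M : X' → Set Y')
    (hM : ∀ (x : X') (y : Y'), y ∈ M x → (y : Y) ∈ cSubdiff c f x)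
    (S : Set X') (hS : S.Nonempty) (hSdom : S ⊆ mapDom M) :
    (IsCAntiderivative (fun (x : X') (y : Y') => c x y)
          (fun x => f x + indicatorE (mapDom M) x) M ∧
        ∀ s ∈ S, f (s : X) + indicatorE (mapDom M) s = f s) ∧
      (cFamily (fun (x : X') (y : Y') => c x y) (fun x : X' => f x) S M).Nonempty :=
  statement14_general c X' Y' f hf M hM S hS hSdom
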